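/- arXiv:1907.11239 — 7 statements merged into one kernel-verified Lean document; each statement's English description precedes it below -/
import Mathlib

section
/- Let c > 0, let 0 ≤ β < 1, and let q : ℝ → EuclideanSpace ℝ (Fin 3) satisfy ‖q t₁ − q t₂‖ ≤ β·c·|t₁ − t₂| for all t₁, t₂ ∈ ℝ (a subluminal Lipschitz trajectory). Then for every time t ∈ ℝ and every point s ∈ EuclideanSpace ℝ (Fin 3) there exists a unique retarded time t_r ∈ ℝ such that c·(t − t_r) = ‖s − q t_r‖; moreover this t_r satisfies t_r ≤ t. -/
/-!
Writing the light-cone condition as `c·τ + ‖s − q τ‖ = c·t`, the left side is the sum of a linear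
function of slope `c` and a function that is Lipschitz with constant `β·c < c`. Such a sum grows at
least at rate `(1 − β)·c`, so it is a continuous strictly increasing map of `ℝ` onto `ℝ`, and takes
the value `c·t` exactly once. The retarded time lies in the past because `‖s − q τ‖ ≥ 0`.
-/

open Filter Function NNReal

theorem bijective_of_mul_sub_le_sub {f : ℝ → ℝ} {m : ℝ} (hm : 0 < m) (hf : Continuous f)
    (hgrowth : ∀ x y, y ≤ x → m * (x - y) ≤ f x - f y) : Bijective f := by
  refine ⟨StrictMono.injective fun y x hyx => ?_, hf.surjective ?_ ?_⟩
  · nlinarith [hgrowth x y hyx.le]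
  · refine tendsto_atTop_mono' atTop ?_ (tendsto_atTop_add_const_left atTop (f 0)
      (tendsto_id.const_mul_atTop hm))
    filter_upwards [eventually_ge_atTop 0] with x hx
    show f 0 + m * x ≤ f x
    linarith [hgrowth x 0 hx]
  · refine tendsto_atBot_mono' atBot ?_ (tendsto_atBot_add_const_left atBot (f 0)
      (tendsto_id.const_mul_atBot hm))
    filter_upwards [eventually_le_atBot 0] with x hx
    show f x ≤ f 0 + m * x
    linarith [hgrowth 0 x hx]

theorem LipschitzWith.bijective_mul_add {φ : ℝ → ℝ} {K : ℝ≥0} {c : ℝ} (hφ : LipschitzWith K φ)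
    (hKc : (K : ℝ) < c) : Bijective fun τ => c * τ + φ τ := by
  refine bijective_of_mul_sub_le_sub (sub_pos.2 hKc) ((continuous_const_mul c).add hφ.continuous)
    fun x y hyx => ?_
  have hdist : |φ x - φ y| ≤ K * (x - y) := by
    simpa [Real.dist_eq, abs_of_nonneg (sub_nonneg.2 hyx)] using hφ.dist_le_mul x y
  linarith [neg_abs_le (φ x - φ y)]

theorem retarded_time_exists_unique_general
    (c β : ℝ) (hc : 0 < c) (hβ1 : β < 1)
    (q : ℝ → EuclideanSpace ℝ (Fin 3))
    (hq : ∀ t₁ t₂ : ℝ, ‖q t₁ - q t₂‖ ≤ β * c * |t₁ - t₂|)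
    (t : ℝ) (s : EuclideanSpace ℝ (Fin 3)) :
    (∃! tr : ℝ, c * (t - tr) = ‖s - q tr‖) ∧
      ∀ tr : ℝ, c * (t - tr) = ‖s - q tr‖ → tr ≤ t := by
  have hq_lip : LipschitzWith (β * c).toNNReal q :=
    LipschitzWith.of_dist_le' fun x y => by simpa [dist_eq_norm, Real.dist_eq] using hq x y
  have hdist_lip : LipschitzWith (1 * (β * c).toNNReal) fun τ => ‖s - q τ‖ := by
    simpa only [comp_def, dist_eq_norm] using (LipschitzWith.dist_right s).comp hq_lip
  have hKc : ((1 * (β * c).toNNReal : ℝ≥0) : ℝ) < c := by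
    rw [one_mul, Real.coe_toNNReal', max_lt_iff]
    exact ⟨by nlinarith, hc⟩
  have hlight_cone : ∀ τ, c * τ + ‖s - q τ‖ = c * t ↔ c * (t - τ) = ‖s - q τ‖ := fun τ => by
    constructor <;> intro h <;> linarith
  refine ⟨(existsUnique_congr hlight_cone).1 ((hdist_lip.bijective_mul_add hKc).existsUnique _),
    fun tr htr => ?_⟩
  have : 0 ≤ c * (t - tr) := htr ▸ norm_nonneg _
  nlinarith

/-- **Existence and uniqueness of the retarded time.**
For a subluminal Lipschitz trajectory `q` (with Lipschitz constant `β·c`, `β < 1`),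
for every time `t` and field point `s` there is a unique retarded time `t_r` with
`c·(t − t_r) = ‖s − q t_r‖`, and any such retarded time satisfies `t_r ≤ t`. -/
theorem retarded_time_exists_unique
    (c β : ℝ) (hc : 0 < c) (hβ0 : 0 ≤ β) (hβ1 : β < 1)
    (q : ℝ → EuclideanSpace ℝ (Fin 3))
    (hq : ∀ t₁ t₂ : ℝ, ‖q t₁ - q t₂‖ ≤ β * c * |t₁ - t₂|)
    (t : ℝ) (s : EuclideanSpace ℝ (Fin 3)) :
    (∃! tr : ℝ, c * (t - tr) = ‖s - q tr‖) ∧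
      ∀ tr : ℝ, c * (t - tr) = ‖s - q tr‖ → tr ≤ t :=
  retarded_time_exists_unique_general c β hc hβ1 q hq t s
end

section
/- Let b > 0 and let E, B ∈ EuclideanSpace ℝ (Fin 3) be such that Q := 1 − (‖E‖² − ‖B‖²)/b² − ⟪E,B⟫²/b⁴ > 0. Define the Born–Infeld fields H := (B − b⁻²·⟪B,E⟫·E)/√Q and D := (E + b⁻²·⟪B,E⟫·B)/√Q, and set R := 1 + (‖B‖² + ‖D‖²)/b² + ‖B × D‖²/b⁴. Then the inverted Born–Infeld vacuum law holds: E = (D − b⁻²·(B × (B × D)))/√R and H = (B − b⁻²·(D × (D × B)))/√R. -/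
/-!
Write `c = b⁻²`, `s = √Q` and `k = 1 + c‖B‖²`. Pairing the law for `D` with `B`, and taking its
norm, gives `s⟪B, D⟫ = k⟪B, E⟫` and `s²(1 + c‖D‖²) = k(1 + c²⟪B, E⟫²)`. With Lagrange's identity
for `‖B × D‖²` these combine to `s²R = k²`, so `√R = k/s`. Expanding the double cross products by
`a × (a × d) = ⟪a, d⟫a - ‖a‖²d`, both inverted formulas then become linear identities between
`E, B, D, H` with coefficients polynomial in `c`.
-/

/-- The cross product on three-dimensional Euclidean space. -/
noncomputable def cross3 (a b : EuclideanSpace ℝ (Fin 3)) : EuclideanSpace ℝ (Fin 3) :=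
  (EuclideanSpace.equiv (Fin 3) ℝ).symm
    ![a 1 * b 2 - a 2 * b 1, a 2 * b 0 - a 0 * b 2, a 0 * b 1 - a 1 * b 0]

open scoped RealInnerProductSpace

theorem cross3_cross3_self (a d : EuclideanSpace ℝ (Fin 3)) :
    cross3 a (cross3 a d) = ⟪a, d⟫ • a - ‖a‖ ^ 2 • d := by
  ext i
  fin_cases i <;>
    simp [cross3, PiLp.inner_apply, Fin.sum_univ_three, EuclideanSpace.norm_sq_eq] <;> ring

theorem norm_cross3_sq (a d : EuclideanSpace ℝ (Fin 3)) :
    ‖cross3 a d‖ ^ 2 = ‖a‖ ^ 2 * ‖d‖ ^ 2 - ⟪a, d⟫ ^ 2 := by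
  simp [cross3, PiLp.inner_apply, Fin.sum_univ_three, EuclideanSpace.norm_sq_eq]
  ring

namespace BornInfeld

section InnerProductSpace

variable {V : Type*} [NormedAddCommGroup V] [InnerProductSpace ℝ V] {c s : ℝ} {E B D H : V}

theorem inner_displacement (hD : s • D = E + c • (⟪B, E⟫ • B)) :
    s * ⟪B, D⟫ = (1 + c * ‖B‖ ^ 2) * ⟪B, E⟫ := by
  rw [← real_inner_smul_right, hD, inner_add_right, real_inner_smul_right, real_inner_smul_right,
    real_inner_self_eq_norm_sq]
  ring

theorem sq_mul_one_add_norm_displacement_sq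
    (hs : s ^ 2 = 1 - c * (‖E‖ ^ 2 - ‖B‖ ^ 2) - c ^ 2 * ⟪E, B⟫ ^ 2)
    (hD : s • D = E + c • (⟪B, E⟫ • B)) :
    s ^ 2 * (1 + c * ‖D‖ ^ 2) = (1 + c * ‖B‖ ^ 2) * (1 + c ^ 2 * ⟪B, E⟫ ^ 2) := by
  have hDD : s ^ 2 * ‖D‖ ^ 2 =
      ‖E‖ ^ 2 + 2 * c * ⟪B, E⟫ ^ 2 + c ^ 2 * ⟪B, E⟫ ^ 2 * ‖B‖ ^ 2 := by
    rw [← sq_abs s, ← mul_pow, ← Real.norm_eq_abs, ← norm_smul, hD, norm_add_sq_real, norm_smul,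
      norm_smul, real_inner_smul_right, real_inner_smul_right, real_inner_comm B E]
    simp only [Real.norm_eq_abs, mul_pow, sq_abs]
    ring
  rw [real_inner_comm B E] at hs
  linear_combination hs + c * hDD

theorem electric_field_smul (hD : s • D = E + c • (⟪B, E⟫ • B)) :
    s • (D - c • (⟪B, D⟫ • B - ‖B‖ ^ 2 • D)) = (1 + c * ‖B‖ ^ 2) • E := by
  have hBD := inner_displacement hD
  linear_combination (norm := module) (1 + c * ‖B‖ ^ 2) • hD - c • hBD • B

theorem magnetic_field_smul (hs0 : s ≠ 0)
    (hs : s ^ 2 = 1 - c * (‖E‖ ^ 2 - ‖B‖ ^ 2) - c ^ 2 * ⟪E, B⟫ ^ 2)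
    (hD : s • D = E + c • (⟪B, E⟫ • B)) (hH : s • H = B - c • (⟪B, E⟫ • E)) :
    s • (B - c • (⟪D, B⟫ • D - ‖D‖ ^ 2 • B)) = (1 + c * ‖B‖ ^ 2) • H := by
  have hDB := inner_displacement hD
  have hDD := sq_mul_one_add_norm_displacement_sq hs hD
  rw [real_inner_comm] at hDB
  apply smul_right_injective V hs0
  linear_combination (norm := module) hDD • B - c • hDB • (s • D) -
    (c * (1 + c * ‖B‖ ^ 2) * ⟪B, E⟫) • hD - (1 + c * ‖B‖ ^ 2) • hH

end InnerProductSpace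

theorem sq_mul_inverted_factor {c s : ℝ} {E B D : EuclideanSpace ℝ (Fin 3)}
    (hs : s ^ 2 = 1 - c * (‖E‖ ^ 2 - ‖B‖ ^ 2) - c ^ 2 * ⟪E, B⟫ ^ 2)
    (hD : s • D = E + c • (⟪B, E⟫ • B)) :
    s ^ 2 * (1 + c * (‖B‖ ^ 2 + ‖D‖ ^ 2) + c ^ 2 * ‖cross3 B D‖ ^ 2) =
      (1 + c * ‖B‖ ^ 2) ^ 2 := by
  have hBD := inner_displacement hD
  have hDD := sq_mul_one_add_norm_displacement_sq hs hD
  rw [norm_cross3_sq]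
  linear_combination (1 + c * ‖B‖ ^ 2) * hDD -
    c ^ 2 * (s * ⟪B, D⟫ + (1 + c * ‖B‖ ^ 2) * ⟪B, E⟫) * hBD

end BornInfeld

theorem born_infeld_law_inversion_general
    (b : ℝ) (E B : EuclideanSpace ℝ (Fin 3))
    (Q : ℝ) (hQdef : Q = 1 - (‖E‖ ^ 2 - ‖B‖ ^ 2) / b ^ 2 - (inner ℝ E B : ℝ) ^ 2 / b ^ 4)
    (hQ : 0 < Q)
    (H D : EuclideanSpace ℝ (Fin 3))
    (hH : H = (Real.sqrt Q)⁻¹ • (B - (b ^ 2)⁻¹ • ((inner ℝ B E : ℝ) • E)))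
    (hD : D = (Real.sqrt Q)⁻¹ • (E + (b ^ 2)⁻¹ • ((inner ℝ B E : ℝ) • B)))
    (R : ℝ) (hR : R = 1 + (‖B‖ ^ 2 + ‖D‖ ^ 2) / b ^ 2 + ‖cross3 B D‖ ^ 2 / b ^ 4) :
    E = (Real.sqrt R)⁻¹ • (D - (b ^ 2)⁻¹ • cross3 B (cross3 B D)) ∧
    H = (Real.sqrt R)⁻¹ • (B - (b ^ 2)⁻¹ • cross3 D (cross3 D B)) := by
  set s := Real.sqrt Q
  set k := 1 + (b ^ 2)⁻¹ * ‖B‖ ^ 2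
  have hs : 0 < s := Real.sqrt_pos.2 hQ
  have hk : 0 < k := by positivity
  have hs2 : s ^ 2 = 1 - (b ^ 2)⁻¹ * (‖E‖ ^ 2 - ‖B‖ ^ 2) - (b ^ 2)⁻¹ ^ 2 * ⟪E, B⟫ ^ 2 := by
    rw [Real.sq_sqrt hQ.le, hQdef]; ring
  have hsD : s • D = E + (b ^ 2)⁻¹ • (⟪B, E⟫ • B) := by rw [hD, smul_inv_smul₀ hs.ne']
  have hsH : s • H = B - (b ^ 2)⁻¹ • (⟪B, E⟫ • E) := by rw [hH, smul_inv_smul₀ hs.ne']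
  have hsqrtR : Real.sqrt R = k / s := by
    rw [← Real.sqrt_sq (div_pos hk hs).le, div_pow]
    congr 1
    rw [eq_div_iff (by positivity), hR]
    linear_combination BornInfeld.sq_mul_inverted_factor hs2 hsD
  rw [hsqrtR, inv_div, div_eq_inv_mul, mul_smul, mul_smul, cross3_cross3_self, cross3_cross3_self,
    BornInfeld.electric_field_smul hsD, BornInfeld.magnetic_field_smul hs.ne' hs2 hsD hsH,
    inv_smul_smul₀ hk.ne', inv_smul_smul₀ hk.ne']
  exact ⟨rfl, rfl⟩

/-- **Inversion of the Born–Infeld vacuum law.**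
If `H` and `D` are defined from `(E,B)` by the Born–Infeld law (with `Q > 0`), then
`(E,H)` may conversely be expressed in terms of `(B,D)` by the inverted law. -/
theorem born_infeld_law_inversion
    (b : ℝ) (hb : 0 < b) (E B : EuclideanSpace ℝ (Fin 3))
    (Q : ℝ) (hQdef : Q = 1 - (‖E‖ ^ 2 - ‖B‖ ^ 2) / b ^ 2 - (inner ℝ E B : ℝ) ^ 2 / b ^ 4)
    (hQ : 0 < Q)
    (H D : EuclideanSpace ℝ (Fin 3))
    (hH : H = (Real.sqrt Q)⁻¹ • (B - (b ^ 2)⁻¹ • ((inner ℝ B E : ℝ) • E)))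
    (hD : D = (Real.sqrt Q)⁻¹ • (E + (b ^ 2)⁻¹ • ((inner ℝ B E : ℝ) • B)))
    (R : ℝ) (hR : R = 1 + (‖B‖ ^ 2 + ‖D‖ ^ 2) / b ^ 2 + ‖cross3 B D‖ ^ 2 / b ^ 4) :
    E = (Real.sqrt R)⁻¹ • (D - (b ^ 2)⁻¹ • cross3 B (cross3 B D)) ∧
    H = (Real.sqrt R)⁻¹ • (B - (b ^ 2)⁻¹ • cross3 D (cross3 D B)) :=
  born_infeld_law_inversion_general b E B Q hQdef hQ H D hH hD R hR
end

section
/- Let b > 0 and let E, B ∈ EuclideanSpace ℝ (Fin 3) satisfy b⁴ − b²(‖E‖² − ‖B‖²) − ⟪E,B⟫² > 0. Define the Born–Infeld Lagrangian density ℒ(E,B) := b² − √(b⁴ − b²(‖E‖² − ‖B‖²) − ⟪E,B⟫²). Then the gradient of the map E ↦ ℒ(E,B) at E equals (E + b⁻²·⟪E,B⟫·B)/√Q, and the gradient of the map B ↦ ℒ(E,B) at B equals −(B − b⁻²·⟪E,B⟫·E)/√Q, where Q := 1 − (‖E‖² − ‖B‖²)/b² − ⟪E,B⟫²/b⁴.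 (That is, D = ∂ℒ/∂E and H = −∂ℒ/∂B recover the Born–Infeld vacuum law.) -/
/-!
As a function of `E` alone (or of `B` alone) the Lagrangian is `b² − √d` with `d` built from
`‖·‖²` and the square of a linear functional, so the gradients follow from a few rules of
calculus for gradients together with `√d = b² √Q`.
-/

open InnerProductSpace

section GradientCalculus

variable {F : Type*} [NormedAddCommGroup F] [InnerProductSpace ℝ F] [CompleteSpace F]
  {f g : F → ℝ} {f' g' x : F}

theorem hasGradientAt_const_inner (v x : F) : HasGradientAt (fun y => inner ℝ v y) v x :=
  (toDual ℝ F v).hasFDerivAt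

theorem hasGradientAt_inner_const (v x : F) : HasGradientAt (fun y => inner ℝ y v) v x :=
  (hasGradientAt_const_inner v x).congr_of_eventuallyEq (.of_forall fun y => real_inner_comm v y)

theorem hasGradientAt_norm_sq (x : F) : HasGradientAt (fun y => ‖y‖ ^ 2) ((2 : ℝ) • x) x := by
  rw [hasGradientAt_iff_hasFDerivAt]
  refine (hasStrictFDerivAt_norm_sq x).hasFDerivAt.congr_fderiv ?_
  ext y; simp

theorem HasGradientAt.add (hf : HasGradientAt f f' x) (hg : HasGradientAt g g' x) :
    HasGradientAt (fun y => f y + g y) (f' + g') x := by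
  rw [hasGradientAt_iff_hasFDerivAt, map_add]
  exact hf.hasFDerivAt.add hg.hasFDerivAt

theorem HasGradientAt.sub (hf : HasGradientAt f f' x) (hg : HasGradientAt g g' x) :
    HasGradientAt (fun y => f y - g y) (f' - g') x := by
  rw [hasGradientAt_iff_hasFDerivAt, map_sub]
  exact hf.hasFDerivAt.sub hg.hasFDerivAt

theorem HasGradientAt.const_sub (c : ℝ) (hf : HasGradientAt f f' x) :
    HasGradientAt (fun y => c - f y) (-f') x := by
  rw [hasGradientAt_iff_hasFDerivAt, map_neg]
  exact hf.hasFDerivAt.const_sub c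

theorem HasGradientAt.sub_const (c : ℝ) (hf : HasGradientAt f f' x) :
    HasGradientAt (fun y => f y - c) f' x :=
  hf.hasFDerivAt.sub_const c

theorem HasGradientAt.const_mul (c : ℝ) (hf : HasGradientAt f f' x) :
    HasGradientAt (fun y => c * f y) (c • f') x := by
  rw [hasGradientAt_iff_hasFDerivAt, map_smul]
  exact hf.hasFDerivAt.const_mul c

theorem HasGradientAt.sq (hf : HasGradientAt f f' x) :
    HasGradientAt (fun y => f y ^ 2) ((2 * f x) • f') x := by
  rw [hasGradientAt_iff_hasFDerivAt, map_smul]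
  exact (hf.hasFDerivAt.pow 2).congr_fderiv (by norm_num)

theorem HasGradientAt.sqrt (hf : HasGradientAt f f' x) (hx : f x ≠ 0) :
    HasGradientAt (fun y => √(f y)) ((2 * √(f x))⁻¹ • f') x := by
  rw [hasGradientAt_iff_hasFDerivAt, map_smul, ← one_div]
  exact hf.hasFDerivAt.sqrt hx

end GradientCalculus

section BornInfeld

variable {F : Type*} [NormedAddCommGroup F] [InnerProductSpace ℝ F]

noncomputable def bornInfeldDiscriminant (b : ℝ) (E B : F) : ℝ :=
  b ^ 4 - b ^ 2 * (‖E‖ ^ 2 - ‖B‖ ^ 2) - inner ℝ E B ^ 2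

noncomputable def bornInfeldLagrangian (b : ℝ) (E B : F) : ℝ :=
  b ^ 2 - √(bornInfeldDiscriminant b E B)

theorem sqrt_bornInfeldDiscriminant {b : ℝ} (hb : b ≠ 0) (E B : F) :
    √(bornInfeldDiscriminant b E B) =
      b ^ 2 * √(1 - (‖E‖ ^ 2 - ‖B‖ ^ 2) / b ^ 2 - inner ℝ E B ^ 2 / b ^ 4) := by
  have hdisc : bornInfeldDiscriminant b E B =
      (b ^ 2) ^ 2 * (1 - (‖E‖ ^ 2 - ‖B‖ ^ 2) / b ^ 2 - inner ℝ E B ^ 2 / b ^ 4) := by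
    unfold bornInfeldDiscriminant
    field_simp
  rw [hdisc, Real.sqrt_mul (by positivity), Real.sqrt_sq (by positivity)]

variable [CompleteSpace F] (b : ℝ) (E B : F)

theorem hasGradientAt_bornInfeldDiscriminant_left :
    HasGradientAt (fun E' => bornInfeldDiscriminant b E' B)
      (-(2 : ℝ) • ((b ^ 2) • E + inner ℝ E B • B)) E := by
  unfold bornInfeldDiscriminant
  convert (((hasGradientAt_norm_sq E).sub_const (‖B‖ ^ 2)).const_mul (b ^ 2)).const_sub (b ^ 4)
    |>.sub (hasGradientAt_inner_const B E).sq using 1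
  module

theorem hasGradientAt_bornInfeldDiscriminant_right :
    HasGradientAt (fun B' => bornInfeldDiscriminant b E B')
      ((2 : ℝ) • ((b ^ 2) • B - inner ℝ E B • E)) B := by
  unfold bornInfeldDiscriminant
  convert (((hasGradientAt_norm_sq B).const_sub (‖E‖ ^ 2)).const_mul (b ^ 2)).const_sub (b ^ 4)
    |>.sub (hasGradientAt_const_inner E B).sq using 1
  module

variable {b E B}

theorem hasGradientAt_bornInfeldLagrangian_left (h : 0 < bornInfeldDiscriminant b E B) :
    HasGradientAt (fun E' => bornInfeldLagrangian b E' B)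
      ((√(bornInfeldDiscriminant b E B))⁻¹ • ((b ^ 2) • E + inner ℝ E B • B)) E := by
  have hsqrt : √(bornInfeldDiscriminant b E B) ≠ 0 := (Real.sqrt_pos.2 h).ne'
  unfold bornInfeldLagrangian
  convert ((hasGradientAt_bornInfeldDiscriminant_left b E B).sqrt h.ne').const_sub (b ^ 2)
    using 1
  match_scalars <;> field_simp

theorem hasGradientAt_bornInfeldLagrangian_right (h : 0 < bornInfeldDiscriminant b E B) :
    HasGradientAt (fun B' => bornInfeldLagrangian b E B')
      (-((√(bornInfeldDiscriminant b E B))⁻¹ • ((b ^ 2) • B - inner ℝ E B • E))) B := by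
  have hsqrt : √(bornInfeldDiscriminant b E B) ≠ 0 := (Real.sqrt_pos.2 h).ne'
  unfold bornInfeldLagrangian
  convert ((hasGradientAt_bornInfeldDiscriminant_right b E B).sqrt h.ne').const_sub (b ^ 2)
    using 1
  match_scalars <;> field_simp

end BornInfeld

theorem born_infeld_lagrangian_gradients_general
    (b : ℝ) (E B : EuclideanSpace ℝ (Fin 3))
    (hpos : 0 < b ^ 4 - b ^ 2 * (‖E‖ ^ 2 - ‖B‖ ^ 2) - (inner ℝ E B : ℝ) ^ 2)
    (L : EuclideanSpace ℝ (Fin 3) → EuclideanSpace ℝ (Fin 3) → ℝ)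
    (hL : ∀ E' B' : EuclideanSpace ℝ (Fin 3),
      L E' B' = b ^ 2 -
        Real.sqrt (b ^ 4 - b ^ 2 * (‖E'‖ ^ 2 - ‖B'‖ ^ 2) - (inner ℝ E' B' : ℝ) ^ 2))
    (Q : ℝ) (hQ : Q = 1 - (‖E‖ ^ 2 - ‖B‖ ^ 2) / b ^ 2 - (inner ℝ E B : ℝ) ^ 2 / b ^ 4) :
    HasGradientAt (fun E' => L E' B)
      ((Real.sqrt Q)⁻¹ • (E + (b ^ 2)⁻¹ • ((inner ℝ E B : ℝ) • B))) E ∧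
    HasGradientAt (fun B' => L E B')
      (-((Real.sqrt Q)⁻¹ • (B - (b ^ 2)⁻¹ • ((inner ℝ E B : ℝ) • E)))) B := by
  have hb : b ≠ 0 := by
    rintro rfl
    nlinarith [sq_nonneg (inner ℝ E B)]
  have hsqrt : √(bornInfeldDiscriminant b E B) = b ^ 2 * √Q :=
    hQ ▸ sqrt_bornInfeldDiscriminant hb E B
  obtain rfl : L = bornInfeldLagrangian b := funext fun E' => funext (hL E')
  constructor
  · convert hasGradientAt_bornInfeldLagrangian_left hpos using 1
    rw [hsqrt]
    match_scalars <;> field_simp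
  · convert hasGradientAt_bornInfeldLagrangian_right hpos using 1
    rw [hsqrt]
    match_scalars <;> field_simp

/-- **The Born–Infeld vacuum law from the Born–Infeld Lagrangian.**
For the Born–Infeld Lagrangian density `ℒ(E,B) = b² − √(b⁴ − b²(‖E‖²−‖B‖²) − ⟪E,B⟫²)`,
the gradient in `E` is `D = (E + b⁻²⟪E,B⟫B)/√Q` and the gradient in `B` is
`−H = −(B − b⁻²⟪E,B⟫E)/√Q`. -/
theorem born_infeld_lagrangian_gradients
    (b : ℝ) (hb : 0 < b) (E B : EuclideanSpace ℝ (Fin 3))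
    (hpos : 0 < b ^ 4 - b ^ 2 * (‖E‖ ^ 2 - ‖B‖ ^ 2) - (inner ℝ E B : ℝ) ^ 2)
    (L : EuclideanSpace ℝ (Fin 3) → EuclideanSpace ℝ (Fin 3) → ℝ)
    (hL : ∀ E' B' : EuclideanSpace ℝ (Fin 3),
      L E' B' = b ^ 2 -
        Real.sqrt (b ^ 4 - b ^ 2 * (‖E'‖ ^ 2 - ‖B'‖ ^ 2) - (inner ℝ E' B' : ℝ) ^ 2))
    (Q : ℝ) (hQ : Q = 1 - (‖E‖ ^ 2 - ‖B‖ ^ 2) / b ^ 2 - (inner ℝ E B : ℝ) ^ 2 / b ^ 4) :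
    HasGradientAt (fun E' => L E' B)
      ((Real.sqrt Q)⁻¹ • (E + (b ^ 2)⁻¹ • ((inner ℝ E B : ℝ) • B))) E ∧
    HasGradientAt (fun B' => L E B')
      (-((Real.sqrt Q)⁻¹ • (B - (b ^ 2)⁻¹ • ((inner ℝ E B : ℝ) • E)))) B :=
  born_infeld_lagrangian_gradients_general b E B hpos L hL Q hQ
end

section
/- Let c > 0, m ∈ ℝ with m ≠ 0, and let v ∈ EuclideanSpace ℝ (Fin 3) with ‖v‖ < c. Set p := (m/√(1 − ‖v‖²/c²))·v. Then the map φ(w) := (m/√(1 − ‖w‖²/c²))·w is Fréchet differentiable at v with derivative L given by L(a) = (m/√(1 − ‖v‖²/c²))·(a + (⟪v,a⟫/(c² − ‖v‖²))·v), and the matrix W[p] defined by W[p](f) := (1/(m·√(1 + ‖p‖²/(m²c²))))·(f − (⟪p,f⟫/(m²c² + ‖p‖²))·p) inverts this derivative: W[p](L(a)) = a for every a ∈ EuclideanSpace ℝ (Fin 3). -/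
/-!
Write `γ(w) = m / √(1 - ‖w‖² / c²)`. Since `∇γ(v) = γ(v) v / (c² - ‖v‖²)`, the product rule for
`w ↦ γ(w) w` gives `L`. With `p = γ(v) v`, the energy–momentum relation `m² c² + ‖p‖² = γ(v)² c²`
turns the prefactor of `W[p]` into `γ(v)⁻¹` and its denominator into `γ(v)² c²`; then
`W[p] (L a) = a + (t - (⟪v, a⟫ + t ‖v‖²) / c²) v` with `t = ⟪v, a⟫ / (c² - ‖v‖²)`, and the
coefficient of `v` vanishes.
-/

open Real InnerProductSpace

theorem one_sub_div_sq_pos {t c : ℝ} (hc : c ≠ 0) (ht : t < c ^ 2) : 0 < 1 - t / c ^ 2 := by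
  rw [sub_pos, div_lt_one (by positivity)]
  exact ht

theorem hasDerivAt_div_sqrt_one_sub_div_sq {t c : ℝ} (m : ℝ) (hc : c ≠ 0) (ht : t < c ^ 2) :
    HasDerivAt (fun s : ℝ => m / √(1 - s / c ^ 2))
      (m / √(1 - t / c ^ 2) / (2 * (c ^ 2 - t))) t := by
  have hd := one_sub_div_sq_pos hc ht
  have hs : 0 < √(1 - t / c ^ 2) := sqrt_pos.mpr hd
  have hsqrt := (((hasDerivAt_id t).div_const (c ^ 2)).const_sub 1).sqrt hd.ne'
  refine ((hasDerivAt_const t m).div hsqrt hs.ne').congr_deriv ?_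
  have hcd : c ^ 2 - t = c ^ 2 * √(1 - t / c ^ 2) ^ 2 := by rw [sq_sqrt hd.le]; field_simp
  simp only [id, hcd]
  generalize √(1 - t / c ^ 2) = s at hs ⊢
  field_simp
  ring

section Norm

variable {E : Type*} [SeminormedAddCommGroup E] {c : ℝ} {v : E}

theorem pos_of_norm_lt (hv : ‖v‖ < c) : 0 < c :=
  (norm_nonneg v).trans_lt hv

theorem norm_sq_lt_sq_of_norm_lt (hv : ‖v‖ < c) : ‖v‖ ^ 2 < c ^ 2 :=
  pow_lt_pow_left₀ hv (norm_nonneg v) two_ne_zero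

theorem one_sub_norm_sq_div_sq_pos (hv : ‖v‖ < c) : 0 < 1 - ‖v‖ ^ 2 / c ^ 2 :=
  one_sub_div_sq_pos (pos_of_norm_lt hv).ne' (norm_sq_lt_sq_of_norm_lt hv)

theorem sq_sub_norm_sq_ne_zero (hv : ‖v‖ < c) : c ^ 2 - ‖v‖ ^ 2 ≠ 0 :=
  (sub_pos.mpr (norm_sq_lt_sq_of_norm_lt hv)).ne'

end Norm

section InnerProduct

variable {E : Type*} [NormedAddCommGroup E] [InnerProductSpace ℝ E] {m c : ℝ} {v : E}

theorem hasFDerivAt_div_sqrt_one_sub_norm_sq_div_sq (m : ℝ) (hv : ‖v‖ < c) :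
    HasFDerivAt (fun w : E => m / √(1 - ‖w‖ ^ 2 / c ^ 2))
      ((m / √(1 - ‖v‖ ^ 2 / c ^ 2) / (c ^ 2 - ‖v‖ ^ 2)) • innerSL ℝ v) v := by
  refine ((hasDerivAt_div_sqrt_one_sub_div_sq m (pos_of_norm_lt hv).ne'
    (norm_sq_lt_sq_of_norm_lt hv)).comp_hasFDerivAt v
    (hasStrictFDerivAt_norm_sq v).hasFDerivAt).congr_fderiv ?_
  rw [two_nsmul, smul_add, ← add_smul]
  congr 1
  field_simp [sq_sub_norm_sq_ne_zero hv]
  ring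

noncomputable def momentumFDeriv (m c : ℝ) (v : E) : E →L[ℝ] E :=
  (m / √(1 - ‖v‖ ^ 2 / c ^ 2)) • ContinuousLinearMap.id ℝ E +
    ((m / √(1 - ‖v‖ ^ 2 / c ^ 2) / (c ^ 2 - ‖v‖ ^ 2)) • innerSL ℝ v).smulRight v

theorem momentumFDeriv_apply (a : E) :
    momentumFDeriv m c v a = (m / √(1 - ‖v‖ ^ 2 / c ^ 2)) •
      (a + (⟪v, a⟫_ℝ / (c ^ 2 - ‖v‖ ^ 2)) • v) := by
  simp only [momentumFDeriv, add_apply, smul_apply,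
    ContinuousLinearMap.id_apply, ContinuousLinearMap.smulRight_apply, innerSL_apply_apply,
    smul_add, smul_smul, smul_eq_mul]
  ring_nf

theorem hasFDerivAt_momentum (m : ℝ) (hv : ‖v‖ < c) :
    HasFDerivAt (fun w : E => (m / √(1 - ‖w‖ ^ 2 / c ^ 2)) • w) (momentumFDeriv m c v) v :=
  (hasFDerivAt_div_sqrt_one_sub_norm_sq_div_sq m hv).smul (hasFDerivAt_id v)

theorem mass_sq_mul_sq_add_norm_sq_momentum (m : ℝ) (hv : ‖v‖ < c) :
    m ^ 2 * c ^ 2 + ‖(m / √(1 - ‖v‖ ^ 2 / c ^ 2)) • v‖ ^ 2 =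
      (m / √(1 - ‖v‖ ^ 2 / c ^ 2)) ^ 2 * c ^ 2 := by
  have hc := (pos_of_norm_lt hv).ne'
  have hcv := sq_sub_norm_sq_ne_zero hv
  rw [norm_smul, mul_pow, Real.norm_eq_abs, sq_abs, div_pow,
    sq_sqrt (one_sub_norm_sq_div_sq_pos hv).le]
  field_simp
  ring

theorem mul_sqrt_one_add_norm_sq_momentum (hm : m ≠ 0) (hv : ‖v‖ < c) :
    m * √(1 + ‖(m / √(1 - ‖v‖ ^ 2 / c ^ 2)) • v‖ ^ 2 / (m ^ 2 * c ^ 2)) =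
      m / √(1 - ‖v‖ ^ 2 / c ^ 2) := by
  have hc := (pos_of_norm_lt hv).ne'
  have h : 1 + ‖(m / √(1 - ‖v‖ ^ 2 / c ^ 2)) • v‖ ^ 2 / (m ^ 2 * c ^ 2) =
      (√(1 - ‖v‖ ^ 2 / c ^ 2))⁻¹ ^ 2 := by
    rw [one_add_div (by positivity), mass_sq_mul_sq_add_norm_sq_momentum m hv]
    field_simp
  rw [h, sqrt_sq (by positivity), ← div_eq_mul_inv]

theorem inv_smul_sub_inner_smul_eq {γ : ℝ} (hγ : γ ≠ 0) (hcv : c ^ 2 - ‖v‖ ^ 2 ≠ 0) (hc : c ≠ 0)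
    (a : E) :
    let f := γ • (a + (⟪v, a⟫_ℝ / (c ^ 2 - ‖v‖ ^ 2)) • v)
    γ⁻¹ • (f - (⟪γ • v, f⟫_ℝ / (γ ^ 2 * c ^ 2)) • γ • v) = a := by
  intro f
  have hcoef : ⟪γ • v, f⟫_ℝ / (γ ^ 2 * c ^ 2) = ⟪v, a⟫_ℝ / (c ^ 2 - ‖v‖ ^ 2) := by
    simp only [f, real_inner_smul_left, real_inner_smul_right, inner_add_right,
      real_inner_self_eq_norm_sq]
    field_simp
    ring
  rw [hcoef, smul_comm _ γ v, ← smul_sub, add_sub_cancel_right, inv_smul_smul₀ hγ]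

end InnerProduct

theorem velocity_momentum_derivative_inverted_by_W_general
    (c m : ℝ) (hm : m ≠ 0)
    (v : EuclideanSpace ℝ (Fin 3)) (hv : ‖v‖ < c)
    (p : EuclideanSpace ℝ (Fin 3)) (hp : p = (m / Real.sqrt (1 - ‖v‖ ^ 2 / c ^ 2)) • v)
    (W : EuclideanSpace ℝ (Fin 3) → EuclideanSpace ℝ (Fin 3) → EuclideanSpace ℝ (Fin 3))
    (hW : ∀ p' f : EuclideanSpace ℝ (Fin 3),
      W p' f = (1 / (m * Real.sqrt (1 + ‖p'‖ ^ 2 / (m ^ 2 * c ^ 2)))) •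
        (f - ((inner ℝ p' f : ℝ) / (m ^ 2 * c ^ 2 + ‖p'‖ ^ 2)) • p')) :
    ∃ L : EuclideanSpace ℝ (Fin 3) →L[ℝ] EuclideanSpace ℝ (Fin 3),
      (∀ a : EuclideanSpace ℝ (Fin 3),
        L a = (m / Real.sqrt (1 - ‖v‖ ^ 2 / c ^ 2)) •
          (a + ((inner ℝ v a : ℝ) / (c ^ 2 - ‖v‖ ^ 2)) • v)) ∧
      HasFDerivAt (fun w : EuclideanSpace ℝ (Fin 3) =>
          (m / Real.sqrt (1 - ‖w‖ ^ 2 / c ^ 2)) • w) L v ∧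
      ∀ a : EuclideanSpace ℝ (Fin 3), W p (L a) = a := by
  refine ⟨momentumFDeriv m c v, momentumFDeriv_apply, hasFDerivAt_momentum m hv, fun a => ?_⟩
  have hγ : m / √(1 - ‖v‖ ^ 2 / c ^ 2) ≠ 0 :=
    div_ne_zero hm (sqrt_pos.mpr (one_sub_norm_sq_div_sq_pos hv)).ne'
  rw [hW, hp, mul_sqrt_one_add_norm_sq_momentum hm hv, mass_sq_mul_sq_add_norm_sq_momentum m hv,
    momentumFDeriv_apply, one_div]
  exact inv_smul_sub_inner_smul_eq hγ (sq_sub_norm_sq_ne_zero hv) (pos_of_norm_lt hv).ne' a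

/-- **Fréchet derivative of the relativistic velocity–momentum map and its inverse matrix.**
The map `φ(w) = m·w/√(1 − ‖w‖²/c²)` is differentiable at `v` (with `‖v‖ < c`), its
derivative is `L(a) = (m/√(1 − ‖v‖²/c²))·(a + (⟪v,a⟫/(c² − ‖v‖²))·v)`, and the matrix
`W[p](f) = (1/(m√(1+‖p‖²/(m²c²))))·(f − (⟪p,f⟫/(m²c²+‖p‖²))·p)`, with
`p = m·v/√(1 − ‖v‖²/c²)`, inverts this derivative. -/
theorem velocity_momentum_derivative_inverted_by_W
    (c m : ℝ) (hc : 0 < c) (hm : m ≠ 0)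
    (v : EuclideanSpace ℝ (Fin 3)) (hv : ‖v‖ < c)
    (p : EuclideanSpace ℝ (Fin 3)) (hp : p = (m / Real.sqrt (1 - ‖v‖ ^ 2 / c ^ 2)) • v)
    (W : EuclideanSpace ℝ (Fin 3) → EuclideanSpace ℝ (Fin 3) → EuclideanSpace ℝ (Fin 3))
    (hW : ∀ p' f : EuclideanSpace ℝ (Fin 3),
      W p' f = (1 / (m * Real.sqrt (1 + ‖p'‖ ^ 2 / (m ^ 2 * c ^ 2)))) •
        (f - ((inner ℝ p' f : ℝ) / (m ^ 2 * c ^ 2 + ‖p'‖ ^ 2)) • p')) :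
    ∃ L : EuclideanSpace ℝ (Fin 3) →L[ℝ] EuclideanSpace ℝ (Fin 3),
      (∀ a : EuclideanSpace ℝ (Fin 3),
        L a = (m / Real.sqrt (1 - ‖v‖ ^ 2 / c ^ 2)) •
          (a + ((inner ℝ v a : ℝ) / (c ^ 2 - ‖v‖ ^ 2)) • v)) ∧
      HasFDerivAt (fun w : EuclideanSpace ℝ (Fin 3) =>
          (m / Real.sqrt (1 - ‖w‖ ^ 2 / c ^ 2)) • w) L v ∧
      ∀ a : EuclideanSpace ℝ (Fin 3), W p (L a) = a :=
  velocity_momentum_derivative_inverted_by_W_general c m hm v hv p hp W hW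
end

section
/- Let q ∈ EuclideanSpace ℝ (Fin 3), e ∈ ℝ, let d : EuclideanSpace ℝ (Fin 3) → EuclideanSpace ℝ (Fin 3) be continuous and bounded, and let B : EuclideanSpace ℝ (Fin 3) → EuclideanSpace ℝ (Fin 3) be continuous with compact support. Then the field momentum density s ↦ (−e·‖s − q‖⁻³·(s − q) + d(s)) × B(s) (cross product taken componentwise after identifying EuclideanSpace ℝ (Fin 3) with Fin 3 → ℝ) is integrable over all of EuclideanSpace ℝ (Fin 3). In particular, for initial field data consisting of the Coulomb field of a point charge plus a bounded continuous regular field, together with a continuous compactly supported magnetic field, the total field momentum ∫ D × B is well-defined. -/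
open MeasureTheory

theorem ContinuousLinearMap.integrable_comp₂_of_locallyIntegrable_of_hasCompactSupport
    {X E F G 𝕜 : Type*} [MeasurableSpace X] [TopologicalSpace X] [OpensMeasurableSpace X]
    [T2Space X] {μ : Measure X} [NontriviallyNormedField 𝕜]
    [NormedAddCommGroup E] [NormedSpace 𝕜 E] [NormedAddCommGroup F] [NormedSpace 𝕜 F]
    [NormedAddCommGroup G] [NormedSpace 𝕜 G]
    (L : E →L[𝕜] F →L[𝕜] G) {f : X → E} {g : X → F} (hf : LocallyIntegrable f μ)
    (hg : Continuous g) (h'g : HasCompactSupport g) :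
    Integrable (fun x ↦ L (f x) (g x)) μ := by
  set K := tsupport g
  have hfg : (fun x ↦ L (f x) (g x)) = fun x ↦ L (K.indicator f x) (g x) := by
    funext x
    by_cases hx : x ∈ K
    · simp [hx]
    · simp [hx, image_eq_zero_of_notMem_tsupport hx]
  have hfK : MemLp (K.indicator f) 1 μ := memLp_one_iff_integrable.2 <|
    (integrable_indicator_iff h'g.measurableSet).2 (hf.integrableOn_isCompact h'g)
  have hg_top : MemLp g ⊤ μ := hg.memLp_top_of_hasCompactSupport h'g μ
  rw [hfg, ← memLp_one_iff_integrable]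
  exact hfK.of_bilin (fun u v ↦ L u v) ‖L‖₊ hg_top (L.aestronglyMeasurable_comp₂ hfK.1 hg_top.1)
    (ae_of_all _ fun x ↦ mod_cast L.le_opNorm₂ _ _)

theorem MeasureTheory.LocallyIntegrable.comp_sub_right {G E : Type*} [NormedAddCommGroup G]
    [MeasurableSpace G] [BorelSpace G] [NormedAddCommGroup E] {μ : Measure G}
    [μ.IsAddRightInvariant] {f : G → E} (hf : LocallyIntegrable f μ) (q : G) :
    LocallyIntegrable (fun x ↦ f (x - q)) μ := by
  rw [← map_sub_right_eq_self μ q] at hf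
  exact (locallyIntegrable_map_homeomorph (Homeomorph.subRight q)).1 hf

section Coulomb

variable {E : Type*} [NormedAddCommGroup E] [NormedSpace ℝ E]

noncomputable def coulombField (e : ℝ) (x : E) : E := (-e * (‖x‖ ^ 3)⁻¹) • x

theorem norm_coulombField (e : ℝ) (x : E) : ‖coulombField e x‖ = |e| * ‖x‖ ^ (-2 : ℝ) := by
  rcases eq_or_ne x 0 with rfl | hx
  · simp [coulombField]
  · have hx : 0 < ‖x‖ := norm_pos_iff.2 hx
    rw [coulombField, norm_smul, Real.rpow_neg hx.le, norm_mul, norm_neg, norm_inv, norm_pow,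
      norm_norm, Real.norm_eq_abs]
    field_simp
    norm_cast

theorem locallyIntegrable_coulombField [FiniteDimensional ℝ E] [MeasurableSpace E] [BorelSpace E]
    {μ : Measure E} [μ.IsAddHaarMeasure] (hE : 2 < Module.finrank ℝ E) (e : ℝ) :
    LocallyIntegrable (coulombField e) μ :=
  locallyIntegrable_of_norm_le_rpow (by omega) (by exact_mod_cast hE)
    (ae_of_all _ fun x ↦ (norm_coulombField e x).le) (by unfold coulombField; fun_prop)

end Coulomb

/-- `cross3L a b = cross3 a b` holds by `rfl`. -/
noncomputable def cross3L :
    EuclideanSpace ℝ (Fin 3) →L[ℝ] EuclideanSpace ℝ (Fin 3) →L[ℝ] EuclideanSpace ℝ (Fin 3) :=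
  let φ := (EuclideanSpace.equiv (Fin 3) ℝ).toLinearEquiv
  LinearMap.toContinuousLinearMap <| LinearMap.toContinuousLinearMap.toLinearMap ∘ₗ
    (crossProduct.compl₁₂ φ.toLinearMap φ.toLinearMap).compr₂ φ.symm.toLinearMap

theorem coulomb_field_momentum_density_integrable_general
    (q : EuclideanSpace ℝ (Fin 3)) (e : ℝ)
    (d B : EuclideanSpace ℝ (Fin 3) → EuclideanSpace ℝ (Fin 3))
    (hd : Continuous d)
    (hB : Continuous B) (hBsupp : HasCompactSupport B) :
    MeasureTheory.Integrable
      (fun s : EuclideanSpace ℝ (Fin 3) =>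
        cross3 ((-e * (‖s - q‖ ^ 3)⁻¹) • (s - q) + d s) (B s)) := by
  have hD : LocallyIntegrable fun s ↦ coulombField e (s - q) + d s :=
    ((locallyIntegrable_coulombField (by simp) e).comp_sub_right q).add hd.locallyIntegrable
  exact cross3L.integrable_comp₂_of_locallyIntegrable_of_hasCompactSupport hD hB hBsupp

/-- **The field momentum density `D × B` of a Coulomb-plus-regular field is integrable:**
for `D(s) = −e(s−q)/‖s−q‖³ + d(s)` with `d` bounded and continuous, and `B` continuous
with compact support, the momentum density `s ↦ D(s) × B(s)` is integrable over `ℝ³`. -/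
theorem coulomb_field_momentum_density_integrable
    (q : EuclideanSpace ℝ (Fin 3)) (e : ℝ)
    (d B : EuclideanSpace ℝ (Fin 3) → EuclideanSpace ℝ (Fin 3))
    (hd : Continuous d) (hdbdd : ∃ C : ℝ, ∀ s, ‖d s‖ ≤ C)
    (hB : Continuous B) (hBsupp : HasCompactSupport B) :
    MeasureTheory.Integrable
      (fun s : EuclideanSpace ℝ (Fin 3) =>
        cross3 ((-e * (‖s - q‖ ^ 3)⁻¹) • (s - q) + d s) (B s)) :=
  coulomb_field_momentum_density_integrable_general q e d B hd hB hBsupp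
end

section
/- Let κ > 0 and let u : (Fin 3 → ℝ) → ℝ be twice continuously differentiable, satisfying the screened Poisson (Helmholtz-type) equation Δu(x) = κ²·u(x) for all x, where Δu(x) := Σᵢ ∂²u/∂xᵢ²(x), and suppose u(x) → 0 as ‖x‖ → ∞ (i.e., u tends to 0 along the cocompact filter). Then u is identically zero. In particular, the elliptic equation (1 − κ⁻²Δ)B = F arising in the MBLTP initial-value formulation has at most one solution vanishing at spatial infinity. -/
/-!
Maximum principle. If `u` were positive somewhere, decay at infinity would give it a global
maximum `p` with `u p > 0`. Along each line through `p` the restriction of `u` has a maximum at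
`p`, so every second directional derivative is `≤ 0` there and `Δu p ≤ 0 < κ² u p`. Hence
`u ≤ 0`, and applying this to `-u` gives `u = 0`.
-/

open Filter Topology

theorem IsLocalMax.deriv_deriv_nonpos {f : ℝ → ℝ} {x₀ : ℝ} (h : IsLocalMax f x₀)
    (hc : ContinuousAt f x₀) : deriv (deriv f) x₀ ≤ 0 := by
  by_contra! hpos
  -- the second derivative test makes `x₀` also a local minimum, so `f` is locally constant
  have hmin : IsLocalMin f x₀ := isLocalMin_of_deriv_deriv_pos hpos h.deriv_eq_zero hc
  have hconst : f =ᶠ[𝓝 x₀] fun _ => f x₀ :=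
    (hmin.and h).mono fun _ hx => le_antisymm hx.2 hx.1
  have hzero : deriv (deriv f) x₀ = 0 := by
    simpa using hconst.deriv.deriv_eq
  exact hpos.ne' hzero

section Directional

variable {E F : Type*} [NormedAddCommGroup E] [NormedSpace ℝ E]
  [NormedAddCommGroup F] [NormedSpace ℝ F]

theorem DifferentiableAt.hasDerivAt_comp_add_smul {f : E → F} {p v : E} {t : ℝ}
    (hf : DifferentiableAt ℝ f (p + t • v)) :
    HasDerivAt (fun s : ℝ => f (p + s • v)) (fderiv ℝ f (p + t • v) v) t := by
  have hline : HasDerivAt (fun s : ℝ => p + s • v) v t := by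
    simpa using ((hasDerivAt_id t).smul_const v).const_add p
  exact hf.hasFDerivAt.comp_hasDerivAt t hline

theorem IsLocalMax.fderiv_fderiv_apply_nonpos {u : E → ℝ} {p : E} (h : IsLocalMax u p)
    (v : E) (hu : Differentiable ℝ u) (hu' : DifferentiableAt ℝ (fun y => fderiv ℝ u y v) p) :
    fderiv ℝ (fun y => fderiv ℝ u y v) p v ≤ 0 := by
  set line : ℝ → E := fun t => p + t • v
  set g : ℝ → ℝ := fun t => u (line t)
  have hline : Continuous line := by fun_prop
  have hmax : IsLocalMax g 0 :=
    IsLocalMax.comp_continuous (g := line) (by simpa [line] using h) hline.continuousAt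
  have hg' : deriv g = fun t => fderiv ℝ u (p + t • v) v :=
    funext fun t => (hu _).hasDerivAt_comp_add_smul.deriv
  have hg'' : deriv (deriv g) 0 = fderiv ℝ (fun y => fderiv ℝ u y v) p v := by
    rw [hg']
    have hu'0 : DifferentiableAt ℝ (fun y => fderiv ℝ u y v) (p + (0 : ℝ) • v) := by
      simpa using hu'
    simpa using hu'0.hasDerivAt_comp_add_smul.deriv
  rw [← hg'']
  exact hmax.deriv_deriv_nonpos (hu.continuous.comp hline).continuousAt

end Directional

section LaplacianAlong

variable {E ι : Type*} [NormedAddCommGroup E] [NormedSpace ℝ E] [Fintype ι]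

/-- For the standard basis `v i = Pi.single i 1` of `ℝⁿ` this is the Laplacian. -/
noncomputable def laplacianAlong (v : ι → E) (u : E → ℝ) (x : E) : ℝ :=
  ∑ i, fderiv ℝ (fun y => fderiv ℝ u y (v i)) x (v i)

theorem laplacianAlong_neg (v : ι → E) (u : E → ℝ) (x : E) :
    laplacianAlong v (fun y => -u y) x = -laplacianAlong v u x := by
  simp only [laplacianAlong, fderiv_fun_neg, neg_apply, Finset.sum_neg_distrib]

theorem IsLocalMax.laplacianAlong_nonpos {u : E → ℝ} {p : E} (h : IsLocalMax u p)
    (hu : ContDiff ℝ 2 u) (v : ι → E) : laplacianAlong v u p ≤ 0 := by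
  refine Finset.sum_nonpos fun i _ => h.fderiv_fderiv_apply_nonpos (v i)
    (hu.differentiable two_ne_zero) ?_
  exact ((hu.fderiv_right le_rfl).clm_apply contDiff_const).differentiable one_ne_zero _

theorem nonpos_of_laplacianAlong_eq_mul_of_tendsto_cocompact {c : ℝ} (hc : 0 < c)
    (v : ι → E) {u : E → ℝ} (hu : ContDiff ℝ 2 u)
    (heq : ∀ x, laplacianAlong v u x = c * u x)
    (hdecay : Tendsto u (cocompact E) (𝓝 0)) (x : E) : u x ≤ 0 := by
  by_contra! hx
  obtain ⟨p, hp⟩ := hu.continuous.exists_forall_ge' x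
    (hdecay.eventually (ge_mem_nhds hx))
  have hmax : IsLocalMax u p := Eventually.of_forall hp
  have hpos : 0 < c * u p := mul_pos hc (hx.trans_le (hp x))
  linarith [heq p, hmax.laplacianAlong_nonpos hu v]

end LaplacianAlong

/-- **Uniqueness of decaying solutions of the screened Poisson equation:** a `C²`
solution of `Δu = κ²u` on `ℝ³` (with `κ > 0`) which tends to `0` at spatial infinity
is identically zero. -/
theorem screened_poisson_decaying_solution_unique
    (κ : ℝ) (hκ : 0 < κ)
    (u : (Fin 3 → ℝ) → ℝ) (hu : ContDiff ℝ 2 u)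
    (heq : ∀ x : Fin 3 → ℝ,
      (∑ i : Fin 3, fderiv ℝ (fun y => fderiv ℝ u y (Pi.single i 1)) x (Pi.single i 1)) =
        κ ^ 2 * u x)
    (hdecay : Filter.Tendsto u (Filter.cocompact (Fin 3 → ℝ)) (nhds 0)) :
    ∀ x : Fin 3 → ℝ, u x = 0 := by
  set v : Fin 3 → Fin 3 → ℝ := fun i => Pi.single i 1
  have hκ2 : 0 < κ ^ 2 := pow_pos hκ 2
  have hneg : ∀ x, laplacianAlong v (fun y => -u y) x = κ ^ 2 * -u x := fun x => by
    rw [laplacianAlong_neg, mul_neg, ← heq x]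
    rfl
  intro x
  refine le_antisymm
    (nonpos_of_laplacianAlong_eq_mul_of_tendsto_cocompact hκ2 v hu heq hdecay x) ?_
  simpa using nonpos_of_laplacianAlong_eq_mul_of_tendsto_cocompact hκ2 v hu.neg hneg
    (by simpa using hdecay.neg) x
end

section
/- Let q : ℝ → EuclideanSpace ℝ (Fin 3) be continuously differentiable. Then for every smooth compactly supported test function φ : ℝ × EuclideanSpace ℝ (Fin 3) → ℝ, one has ∫_ℝ ( ∂ₜφ(t, q(t)) + ⟪q'(t), ∇ₛφ(t, q(t))⟫ ) dt = 0, where ∂ₜφ is the partial derivative of φ in its first (time) argument and ∇ₛφ is the gradient of φ in its second (space) argument. In other words, the charge density ρ(t,s) = −e·δ_{q(t)}(s) and current density j(t,s) = −e·v(t)·δ_{q(t)}(s) of a point charge moving along a C¹ trajectory automatically satisfy the continuity equation ∂ₜρ + ∇·j = 0 in the sense of distributions. -/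
open MeasureTheory

/-! By the chain rule the integrand is the derivative of `t ↦ φ (t, q t)`, a `C¹` function
with compact support in time (the support of `φ` is compact), so its integral over `ℝ`
vanishes. -/

theorem HasCompactSupport.integral_deriv_eq_zero {E : Type*} [NormedAddCommGroup E]
    [NormedSpace ℝ E] {f : ℝ → E} (hf : HasCompactSupport f) (hf₁ : ContDiff ℝ 1 f) :
    ∫ t, deriv f t = 0 :=
  integral_eq_zero_of_hasDerivAt_of_integrable
    (fun t ↦ (hf₁.differentiable one_ne_zero t).hasDerivAt)
    ((hf₁.continuous_deriv le_rfl).integrable_of_hasCompactSupport hf.deriv)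
    (hf₁.continuous.integrable_of_hasCompactSupport hf)

theorem HasCompactSupport.comp_graph {X Y M : Type*} [TopologicalSpace X] [R1Space X]
    [TopologicalSpace Y] [Zero M] {φ : X × Y → M} (hφ : HasCompactSupport φ) (g : X → Y) :
    HasCompactSupport (fun x ↦ φ (x, g x)) :=
  .intro (hφ.image continuous_fst) fun x hx ↦
    Classical.byContradiction fun h ↦ hx ⟨(x, g x), subset_tsupport _ h, rfl⟩

theorem deriv_comp_graph {E F : Type*} [NormedAddCommGroup E] [NormedSpace ℝ E]
    [NormedAddCommGroup F] [NormedSpace ℝ F] {φ : ℝ × E → F} {q : ℝ → E} {t : ℝ}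
    (hφ : DifferentiableAt ℝ φ (t, q t)) (hq : DifferentiableAt ℝ q t) :
    deriv (fun s ↦ φ (s, q s)) t =
      deriv (fun s ↦ φ (s, q t)) t + fderiv ℝ (fun y ↦ φ (t, y)) (q t) (deriv q t) := by
  set L := fderiv ℝ φ (t, q t)
  have hL : HasFDerivAt φ L (t, q t) := hφ.hasFDerivAt
  have h_graph : HasDerivAt (fun s ↦ φ (s, q s)) (L (1, deriv q t)) t :=
    hL.comp_hasDerivAt t ((hasDerivAt_id t).prodMk hq.hasDerivAt)
  have h_time : HasDerivAt (fun s ↦ φ (s, q t)) (L (1, 0)) t :=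
    hL.comp_hasDerivAt t ((hasDerivAt_id t).prodMk (hasDerivAt_const t (q t)))
  have h_space : HasFDerivAt (fun y ↦ φ (t, y)) (L.comp (.inr ℝ ℝ E)) (q t) :=
    hL.comp (q t) ((hasFDerivAt_const t (q t)).prodMk (hasFDerivAt_id (q t)))
  rw [h_graph.deriv, h_time.deriv, h_space.fderiv, ContinuousLinearMap.comp_apply,
    ContinuousLinearMap.inr_apply, ← map_add, Prod.mk_add_mk, add_zero, zero_add]

/-- **The point-charge densities satisfy the continuity equation distributionally:**
for a `C¹` trajectory `q` and every smooth compactly supported test function `φ(t,s)`,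
`∫ (∂ₜφ(t, q t) + ⟪q'(t), ∇ₛφ(t, q t)⟫) dt = 0`; i.e. `ρ(t,s) = −e δ_{q(t)}(s)` and
`j(t,s) = −e q'(t) δ_{q(t)}(s)` satisfy `∂ₜρ + ∇·j = 0` in the sense of distributions. -/
theorem point_charge_continuity_equation
    (q : ℝ → EuclideanSpace ℝ (Fin 3)) (hq : ContDiff ℝ 1 q)
    (φ : ℝ × EuclideanSpace ℝ (Fin 3) → ℝ)
    (hφ : ContDiff ℝ (⊤ : ℕ∞) φ) (hsupp : HasCompactSupport φ) :
    ∫ t : ℝ, (deriv (fun τ => φ (τ, q t)) t +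
      (inner ℝ (deriv q t) (gradient (fun y => φ (t, y)) (q t)) : ℝ)) = 0 := by
  have hφ₁ : ContDiff ℝ 1 φ := hφ.of_le (by exact_mod_cast le_top)
  have h_integrand (t : ℝ) : deriv (fun τ => φ (τ, q t)) t +
      inner ℝ (deriv q t) (gradient (fun y => φ (t, y)) (q t)) =
        deriv (fun s ↦ φ (s, q s)) t := by
    rw [inner_gradient_right, conj_trivial, deriv_comp_graph
      (hφ₁.differentiable one_ne_zero _) (hq.differentiable one_ne_zero t)]
  simp_rw [h_integrand]
  exact (hsupp.comp_graph q).integral_deriv_eq_zero (hφ₁.comp (contDiff_id.prodMk hq))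
end
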